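/- arXiv:1609.06166 — 2 statements merged into one kernel-verified Lean document; each statement's English description precedes it below -/
import Mathlib

section
/- Let n ≥ 2 be an integer. Then there exists a Laurent polynomial r_n ∈ ℤ[s,s⁻¹] such that sⁿ + s⁻ⁿ + n(s + s⁻¹) ≡ (1 + s)⁴ · r_n(s) modulo 2 in ℤ[s,s⁻¹], and moreover r_n(1) = n/2 if n is even, while r_n(1) = 0 if n is odd. -/
open LaurentPolynomial

/-- The Laurent polynomial obtained from `g` by substituting `s⁻¹` for `s`
(i.e. negating every exponent). -/
noncomputable def lbar (g : LaurentPolynomial ℤ) : LaurentPolynomial ℤ :=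
  AddMonoidAlgebra.ofCoeff (Finsupp.mapDomain (fun n : ℤ => -n) g.coeff)

/-- Evaluation of a Laurent polynomial at `s = 1`, i.e. the sum of its coefficients. -/
noncomputable def eval1 (g : LaurentPolynomial ℤ) : ℤ :=
  g.coeff.sum fun _ a => a

/-- The additive map `φ : ℤ[s,s⁻¹] → ℤ/2ℤ` determined by `φ(s^k) = k mod 2`;
equivalently, formal derivative followed by evaluation at `1` and reduction mod `2`. -/
noncomputable def phi (g : LaurentPolynomial ℤ) : ZMod 2 :=
  ((g.coeff.sum fun k a => a * k : ℤ) : ZMod 2)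

/-- Two Laurent polynomials are congruent modulo 2 if every coefficient of their
difference is even, i.e. the difference is `2` times a Laurent polynomial. -/
def cong2 (g h : LaurentPolynomial ℤ) : Prop := ∃ p, g - h = 2 * p

/-! Modulo 2 we have `(1 + s)⁴ ≡ (s - 1)⁴`, and `(s - 1) · G_a = s^a - 1` for a Laurent polynomial
`G_a` with `G_a(1) = a`. Writing `n = a + b` with `b ∈ {a, a + 1}` and `r₀ = s⁻ⁿ (G_a G_b)²`,
Frobenius gives `(1 + s)⁴ r₀ ≡ s⁻ⁿ (1 + s^{2a}) (1 + s^{2b}) = sⁿ + s⁻ⁿ + s^{a-b} + s^{b-a}`, and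
`s^{a-b} + s^{b-a} ≡ n (s + s⁻¹)`. Now `r₀(1) = (ab)²` already has the parity of the required value,
and adding an even constant `2c` to `r₀` changes `(1 + s)⁴ r₀` only by a multiple of `2`. -/

local notation "π" => Ideal.Quotient.mk (Ideal.span {(2 : ℤ[T;T⁻¹])})

theorem cong2_iff_mk_eq {g h : ℤ[T;T⁻¹]} : cong2 g h ↔ π g = π h := by
  rw [Ideal.Quotient.eq, Ideal.mem_span_singleton', cong2]
  simp only [eq_comm, mul_comm]

theorem two_eq_zero_mod_two : (2 : ℤ[T;T⁻¹] ⧸ Ideal.span {(2 : ℤ[T;T⁻¹])}) = 0 := by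
  rw [← map_ofNat π 2, Ideal.Quotient.eq_zero_iff_mem]
  exact Ideal.mem_span_singleton_self _

theorem eval1_eq_eval₂ (g : ℤ[T;T⁻¹]) : eval1 g = eval₂ (RingHom.id ℤ) 1 g := by
  induction g using LaurentPolynomial.induction_on' with
  | add p q hp hq =>
    rw [map_add, ← hp, ← hq]
    exact Finsupp.sum_add_index' (fun _ => rfl) (fun _ _ _ => rfl)
  | C_mul_T n a =>
    rw [map_mul, eval₂_C, eval₂_T, ← single_eq_C_mul_T, eval1]
    simp [-single_eq_C_mul_T]

theorem exists_mul_T_one_sub_one_eq (a : ℤ) :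
    ∃ g : ℤ[T;T⁻¹], (T 1 - 1) * g = T a - 1 ∧ eval1 g = a := by
  induction a using Int.inductionOn' (b := 0) with
  | zero => exact ⟨0, by simp, by simp [eval1]⟩
  | succ k _ ih =>
    obtain ⟨g, hg, hg1⟩ := ih
    refine ⟨g + T k, ?_, ?_⟩
    · rw [mul_add, hg, T_add, mul_comm (T k)]; ring
    · rw [eval1_eq_eval₂] at hg1 ⊢; simp [hg1]
  | pred k _ ih =>
    obtain ⟨g, hg, hg1⟩ := ih
    refine ⟨g - T (k - 1), ?_, ?_⟩
    · rw [mul_sub, hg, sub_mul, ← T_add]; ring_nf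
    · rw [eval1_eq_eval₂] at hg1 ⊢; simp [hg1]

theorem one_add_pow_four_mul_sq_of_two_eq_zero {Q : Type*} [CommRing Q] (h2 : (2 : Q) = 0)
    {x g h u v : Q} (hg : (x - 1) * g = u - 1) (hh : (x - 1) * h = v - 1) :
    (1 + x) ^ 4 * (g * h) ^ 2 = (u ^ 2 + 1) * (v ^ 2 + 1) := by
  linear_combination ((x - 1) * g + (u - 1)) * ((x - 1) * h) ^ 2 * hg
    + (u - 1) ^ 2 * ((x - 1) * h + (v - 1)) * hh
    + ((4 * x + 4 * x ^ 3) * (g * h) ^ 2 - u * (v ^ 2 + 1) - v * (u ^ 2 + 1) + 2 * u * v) * h2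

theorem T_neg_add_mul (a b : ℤ) :
    (T (-(a + b)) * (T a ^ 2 + 1) * (T b ^ 2 + 1) : ℤ[T;T⁻¹])
      = T (a + b) + T (-(a + b)) + T (a - b) + T (b - a) := by
  have hA : (T a * T (-a) : ℤ[T;T⁻¹]) = 1 := by rw [← T_add, add_neg_cancel, T_zero]
  have hB : (T b * T (-b) : ℤ[T;T⁻¹]) = 1 := by rw [← T_add, add_neg_cancel, T_zero]
  simp only [sub_eq_add_neg, neg_add, T_add]
  linear_combination (T a * T b * T (-b) * T b + T a * T (-b)) * hA
    + (T a * T b + T (-a) * T b) * hB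

theorem exists_cong2_one_add_T_pow_four_mul {a b : ℤ}
    (hab : cong2 (T (a - b) + T (b - a)) (((a + b : ℤ) : ℤ[T;T⁻¹]) * (T 1 + T (-1)))) :
    ∃ r : ℤ[T;T⁻¹], cong2 (T (a + b) + T (-(a + b)) + ((a + b : ℤ) : ℤ[T;T⁻¹]) * (T 1 + T (-1)))
      ((1 + T 1) ^ 4 * r) ∧ eval1 r = (a * b) ^ 2 := by
  obtain ⟨g, hg, hg1⟩ := exists_mul_T_one_sub_one_eq a
  obtain ⟨h, hh, hh1⟩ := exists_mul_T_one_sub_one_eq b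
  refine ⟨T (-(a + b)) * (g * h) ^ 2, ?_, ?_⟩
  · have key := one_add_pow_four_mul_sq_of_two_eq_zero two_eq_zero_mod_two
      (by simpa using congrArg π hg) (by simpa using congrArg π hh)
    rw [cong2_iff_mk_eq] at hab ⊢
    rw [map_add _ (_ + _), ← hab, ← map_add, ← add_assoc, ← T_neg_add_mul]
    simp only [map_mul, map_add, map_pow, map_one]
    linear_combination -π (T (-(a + b))) * key
  · rw [eval1_eq_eval₂] at hg1 hh1 ⊢; simp [hg1, hh1]

theorem cong2_T_sub_self (a : ℤ) :
    cong2 (T (a - a) + T (a - a)) (((a + a : ℤ) : ℤ[T;T⁻¹]) * (T 1 + T (-1))) :=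
  ⟨1 - (a : ℤ[T;T⁻¹]) * (T 1 + T (-1)), by rw [sub_self, T_zero]; push_cast; ring⟩

theorem cong2_T_sub_add_one (a : ℤ) :
    cong2 (T (a - (a + 1)) + T (a + 1 - a)) (((a + (a + 1) : ℤ) : ℤ[T;T⁻¹]) * (T 1 + T (-1))) :=
  ⟨-(a : ℤ[T;T⁻¹]) * (T 1 + T (-1)), by
    rw [show a - (a + 1) = -1 by ring, show a + 1 - a = 1 by ring]; push_cast; ring⟩

theorem exists_cong2_eval1_eq_of_even_sub {f r : ℤ[T;T⁻¹]} {e : ℤ}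
    (hr : cong2 f ((1 + T 1) ^ 4 * r)) (he : Even (e - eval1 r)) :
    ∃ r' : ℤ[T;T⁻¹], cong2 f ((1 + T 1) ^ 4 * r') ∧ eval1 r' = e := by
  obtain ⟨c, hc⟩ := he
  refine ⟨r + 2 * (c : ℤ[T;T⁻¹]), ?_, ?_⟩
  · rw [cong2_iff_mk_eq] at hr ⊢
    simp [hr]
  · rw [eval1_eq_eval₂] at hc ⊢
    simp only [map_add, map_mul, map_ofNat, map_intCast, Int.cast_id]
    omega

theorem exists_r_n_general (n : ℤ) :
    ∃ r : LaurentPolynomial ℤ,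
      cong2 (T n + T (-n) + (n : LaurentPolynomial ℤ) * (T 1 + T (-1)))
        ((1 + T 1) ^ 4 * r) ∧
      (Even n → 2 * eval1 r = n) ∧ (Odd n → eval1 r = 0) := by
  rcases Int.even_or_odd' n with ⟨k, rfl | rfl⟩
  · obtain ⟨r₀, hr₀, hr₀1⟩ := exists_cong2_one_add_T_pow_four_mul (cong2_T_sub_self k)
    have heven : Even (k - eval1 r₀) := by
      rw [hr₀1, show k - (k * k) ^ 2 = -(k * (k - 1)) * (k ^ 2 + k + 1) by ring]
      exact (Int.even_mul_pred_self k).neg.mul_right _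
    rw [← two_mul] at hr₀
    obtain ⟨r, hr, hr1⟩ := exists_cong2_eval1_eq_of_even_sub hr₀ heven
    exact ⟨r, hr, fun _ => by omega, fun hodd => absurd hodd (by simp [parity_simps])⟩
  · obtain ⟨r₀, hr₀, hr₀1⟩ := exists_cong2_one_add_T_pow_four_mul (cong2_T_sub_add_one k)
    have heven : Even (0 - eval1 r₀) := by
      rw [hr₀1, zero_sub, even_neg]
      exact (Int.even_mul_succ_self k).pow_of_ne_zero two_ne_zero
    rw [show k + (k + 1) = 2 * k + 1 by ring] at hr₀
    obtain ⟨r, hr, hr1⟩ := exists_cong2_eval1_eq_of_even_sub hr₀ heven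
    exact ⟨r, hr, fun hev => absurd hev (by simp [parity_simps]), fun _ => hr1⟩

theorem exists_r_n (n : ℤ) (hn : 2 ≤ n) :
    ∃ r : LaurentPolynomial ℤ,
      cong2 (T n + T (-n) + (n : LaurentPolynomial ℤ) * (T 1 + T (-1)))
        ((1 + T 1) ^ 4 * r) ∧
      (Even n → 2 * eval1 r = n) ∧ (Odd n → eval1 r = 0) :=
  exists_r_n_general n
end

section
/- For all Laurent polynomials u, q ∈ ℤ[s,s⁻¹], one has φ(s·u·q̄ + q·ū + (1 + s)·u·ū) = u(1)·(q(1) + 1) in ℤ/2ℤ, where q̄ and ū denote the Laurent polynomials obtained from q and u by substituting s⁻¹ for s. -/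
/-!
Write `D g` for the formal derivative of `g` evaluated at `s = 1`, so that `φ = D mod 2`.
Evaluation at `1` is multiplicative and invariant under `s ↦ s⁻¹`, `D` satisfies the Leibniz rule
`D (f g) = D f · g(1) + f(1) · D g`, and `D ḡ = - D g`. Expanding with these rules, every term
involving `D u` or `D q` cancels and `D (s u q̄ + q ū + (1 + s) u ū) = u(1) q(1) + u(1)²`;
modulo `2` one has `u(1)² = u(1)`.
-/

open LaurentPolynomial

noncomputable def derivEval1 (g : LaurentPolynomial ℤ) : ℤ :=
  g.coeff.sum fun k a => a * k

theorem phi_eq_derivEval1 (g : LaurentPolynomial ℤ) : phi g = (derivEval1 g : ZMod 2) := rfl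

theorem eval1_single (k a : ℤ) : eval1 (AddMonoidAlgebra.single k a) = a :=
  Finsupp.sum_single_index rfl

theorem derivEval1_single (k a : ℤ) : derivEval1 (AddMonoidAlgebra.single k a) = a * k :=
  Finsupp.sum_single_index (zero_mul _)

theorem eval1_zero : eval1 0 = 0 := Finsupp.sum_zero_index

theorem derivEval1_zero : derivEval1 0 = 0 := Finsupp.sum_zero_index

theorem eval1_add (f g : LaurentPolynomial ℤ) : eval1 (f + g) = eval1 f + eval1 g :=
  Finsupp.sum_add_index' (fun _ => rfl) (fun _ _ _ => rfl)

theorem derivEval1_add (f g : LaurentPolynomial ℤ) :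
    derivEval1 (f + g) = derivEval1 f + derivEval1 g :=
  Finsupp.sum_add_index' (fun _ => zero_mul _) (fun _ _ _ => add_mul _ _ _)

theorem eval1_T (n : ℤ) : eval1 (T n) = 1 := eval1_single n 1

theorem derivEval1_T (n : ℤ) : derivEval1 (T n) = n := by
  rw [T, derivEval1_single, one_mul]

theorem eval1_one : eval1 1 = 1 := by rw [← T_zero, eval1_T]

theorem derivEval1_one : derivEval1 1 = 0 := by rw [← T_zero, derivEval1_T]

theorem eval1_lbar (g : LaurentPolynomial ℤ) : eval1 (lbar g) = eval1 g :=
  Finsupp.sum_mapDomain_index (fun _ => rfl) (fun _ _ _ => rfl)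

theorem derivEval1_lbar (g : LaurentPolynomial ℤ) : derivEval1 (lbar g) = -derivEval1 g := by
  have h : derivEval1 (lbar g) = g.coeff.sum fun k a => a * -k :=
    Finsupp.sum_mapDomain_index (fun _ => zero_mul _) (fun _ _ _ => add_mul _ _ _)
  rw [h, derivEval1, ← Finsupp.sum_neg]
  simp only [mul_neg]

theorem eval1_mul (f g : LaurentPolynomial ℤ) : eval1 (f * g) = eval1 f * eval1 g := by
  induction f using AddMonoidAlgebra.induction_linear with
  | zero => rw [zero_mul, eval1_zero, zero_mul]
  | add f₁ f₂ h₁ h₂ => rw [add_mul, eval1_add, eval1_add, h₁, h₂, add_mul]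
  | single k a =>
    induction g using AddMonoidAlgebra.induction_linear with
    | zero => rw [mul_zero, eval1_zero, mul_zero]
    | add g₁ g₂ h₁ h₂ => rw [mul_add, eval1_add, eval1_add, h₁, h₂, mul_add]
    | single m b =>
      rw [AddMonoidAlgebra.single_mul_single, eval1_single, eval1_single, eval1_single]

theorem derivEval1_mul (f g : LaurentPolynomial ℤ) :
    derivEval1 (f * g) = derivEval1 f * eval1 g + eval1 f * derivEval1 g := by
  induction f using AddMonoidAlgebra.induction_linear with
  | zero => rw [zero_mul, derivEval1_zero, eval1_zero]; ring
  | add f₁ f₂ h₁ h₂ => rw [add_mul, derivEval1_add, derivEval1_add, eval1_add, h₁, h₂]; ring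
  | single k a =>
    induction g using AddMonoidAlgebra.induction_linear with
    | zero => rw [mul_zero, derivEval1_zero, eval1_zero]; ring
    | add g₁ g₂ h₁ h₂ =>
      rw [mul_add, derivEval1_add, derivEval1_add, eval1_add, h₁, h₂]; ring
    | single m b =>
      rw [AddMonoidAlgebra.single_mul_single, derivEval1_single, derivEval1_single,
        derivEval1_single, eval1_single, eval1_single]
      ring

theorem ZMod.two_mul_self (x : ZMod 2) : x * x = x := by
  fin_cases x <;> rfl

theorem phi_combination (u q : LaurentPolynomial ℤ) :
    phi (T 1 * u * lbar q + q * lbar u + (1 + T 1) * u * lbar u) =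
      ((eval1 u * (eval1 q + 1) : ℤ) : ZMod 2) := by
  have hD : derivEval1 (T 1 * u * lbar q + q * lbar u + (1 + T 1) * u * lbar u) =
      eval1 u * eval1 q + eval1 u * eval1 u := by
    simp only [derivEval1_add, derivEval1_mul, eval1_mul, eval1_add, derivEval1_T,
      derivEval1_one, eval1_T, eval1_one, eval1_lbar, derivEval1_lbar]
    ring
  rw [phi_eq_derivEval1, hD]
  push_cast
  rw [ZMod.two_mul_self]
  ring
end
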